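/- (Induction with a common partition, StepF_ind2) Let X and Y be types and Ψ : S X → S Y → Prop a binary predicate. Suppose: (i) Ψ respects the lifted equality relation, i.e. for all s₀ s₁ : S X and t₀ t₁ : S Y, s₀ ≍ s₁ → t₀ ≍ t₁ → Ψ s₀ t₀ → Ψ s₁ t₁; (ii) for all x : X and y : Y, Ψ (const x) (const y); (iii) for every o with 0 < o < 1 and all sl sr : S X, tl tr : S Y, Ψ sl tl → Ψ sr tr → Ψ (glue o sl sr) (glue o tl tr). Then Ψ s t holds for all s : S X and t : S Y. -/
import Mathlib


set_option linter.unusedVariables false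

/-- Rationals strictly between 0 and 1. -/
abbrev OO : Type := {q : ℚ // 0 < q ∧ q < 1}

/-- Rational step functions on the unit interval with values in `X`. -/
inductive S (X : Type) : Type
  | const : X → S X
  | glue : OO → S X → S X → S X

namespace S

def divO (a o : OO) (h : a.1 < o.1) : OO :=
  ⟨a.1 / o.1, div_pos a.2.1 o.2.1, (div_lt_one o.2.1).2 h⟩

def subO (a o : OO) (h : o.1 < a.1) : OO :=
  ⟨(a.1 - o.1) / (1 - o.1),
    div_pos (by linarith) (by linarith [o.2.2]),
    (div_lt_one (by linarith [o.2.2])).2 (by linarith [a.2.2])⟩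

/-- Left split: the part of the step function on `[0,a]`, rescaled to `[0,1]`. -/
def splitL {X : Type} : S X → OO → S X
  | const x, _ => const x
  | glue o f g, a =>
      if h : a.1 < o.1 then splitL f (divO a o h)
      else if h' : o.1 < a.1 then glue (divO o a h') f (splitL g (subO a o h'))
      else f

/-- Right split: the part of the step function on `[a,1]`, rescaled to `[0,1]`. -/
def splitR {X : Type} : S X → OO → S X
  | const x, _ => const x
  | glue o f g, a =>
      if h : a.1 < o.1 then glue (subO o a h) (splitR f (divO a o h)) g
      else if h' : o.1 < a.1 then splitR g (subO a o h')
      else g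

/-- The catamorphism (fold) for step functions. -/
def fold {X Y : Type} (φ : X → Y) (ψ : OO → Y → Y → Y) : S X → Y
  | const x => φ x
  | glue o f g => ψ o (fold φ ψ f) (fold φ ψ g)

/-- `map` for step functions. -/
def mapS {X Y : Type} (f : X → Y) : S X → S Y
  | const x => const (f x)
  | glue o l r => glue o (mapS f l) (mapS f r)

/-- The applicative `ap` (pointwise application) for step functions. -/
def ap {X Y : Type} : S (X → Y) → S X → S Y
  | const f, x => mapS f x
  | glue o fl fr, x => glue o (ap fl (splitL x o)) (ap fr (splitR x o))

/-- Binary map. -/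
def map2 {X Y Z : Type} (f : X → Y → Z) (a : S X) (b : S Y) : S Z :=
  ap (mapS f a) b

/-- `fold⋆`: a step function of propositions holds everywhere. -/
def foldStar : S Prop → Prop := fold id (fun _ p q => p ∧ q)

/-- Lifting of a relation to step functions: it holds pointwise everywhere. -/
def liftRel {X Y : Type} (R : X → Y → Prop) (f : S X) (g : S Y) : Prop :=
  foldStar (map2 R f g)

/-- The equivalence `≍` on step functions: the lifting of equality. -/
def equivS {X : Type} (f g : S X) : Prop := liftRel Eq f g

def foldSup : S ℚ → ℚ := fold id (fun _ x y => max x y)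

def foldAffine : S ℚ → ℚ := fold id (fun o x y => o.1 * x + (1 - o.1) * y)

def normInf (f : S ℚ) : ℚ := foldSup (mapS (fun q => |q|) f)

def normOne (f : S ℚ) : ℚ := foldAffine (mapS (fun q => |q|) f)

def dInf (f g : S ℚ) : ℚ := normInf (map2 (· - ·) f g)

def dOne (f g : S ℚ) : ℚ := normOne (map2 (· - ·) f g)

end S

open S

theorem equivS_refl {X : Type} : ∀ f : S X, equivS f f := by
  intro f
  induction f with
  | const x => exact rfl
  | glue o l r ihl ihr =>
      show foldStar (map2 Eq (glue o l r) (glue o l r))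
      simp only [map2, mapS, ap, splitL, splitR, dif_neg (lt_irrefl o.1)]
      exact ⟨ihl, ihr⟩

theorem equivS_glue_split {X : Type} (t : S X) (o : OO) :
    equivS (glue o (splitL t o) (splitR t o)) t := by
  show foldStar (map2 Eq _ t)
  simp only [map2, mapS, ap]
  exact ⟨equivS_refl _, equivS_refl _⟩

theorem equivS_const_glue {X : Type} (x : X) (o : OO) :
    equivS (glue o (const x) (const x)) (const x) := by
  show foldStar (map2 Eq _ _)
  simp only [map2, mapS, ap, splitL, splitR]
  exact ⟨trivial, trivial⟩

/-- Induction over two step functions with a common partition (`StepF_ind2`). -/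
theorem StepF_ind2 {X Y : Type} (Ψ : S X → S Y → Prop)
    (hwd : ∀ (s₀ s₁ : S X) (t₀ t₁ : S Y),
      equivS s₀ s₁ → equivS t₀ t₁ → Ψ s₀ t₀ → Ψ s₁ t₁)
    (hconst : ∀ (x : X) (y : Y), Ψ (S.const x) (S.const y))
    (hglue : ∀ (o : OO) (sl sr : S X) (tl tr : S Y),
      Ψ sl tl → Ψ sr tr → Ψ (S.glue o sl sr) (S.glue o tl tr)) :
    ∀ (s : S X) (t : S Y), Ψ s t := by
  intro s
  induction s with
  | const x =>
      intro t
      induction t with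
      | const y => exact hconst x y
      | glue o tl tr ihl ihr =>
          exact hwd _ _ _ _ (equivS_const_glue x o) (equivS_refl _)
            (hglue o (const x) (const x) tl tr ihl ihr)
  | glue o sl sr ihl ihr =>
      intro t
      exact hwd _ _ _ _ (equivS_refl _) (equivS_glue_split t o)
        (hglue o sl sr (splitL t o) (splitR t o) (ihl _) (ihr _))
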